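/- Define ⟨n, k⟩_d, for d dividing n+1, as the number of circular permutations of {0,1,...,n} with exactly k+1 cyclic descents that are fixed by adding (n+1)/d modulo n+1 to each letter. Then ⟨dn-1, c-1⟩_d = 0 whenever gcd(c, d) > 1. -/

import Mathlib

/-- Number of cyclic descents of a word `w₀ w₁ ⋯ w_M` on `{0,...,M}` (indices mod `M+1`):
positions `i` with `w i > w (i+1)`. -/
def cyclicDescentCount {M : ℕ} (w : Equiv.Perm (Fin (M + 1))) : ℕ :=
  (Finset.univ.filter (fun i : Fin (M + 1) => w (i + 1) < w i)).card

/-- `⟨M, k⟩_d`-style count: the number of circular permutations of `{0,...,M}` (words on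
all of `{0,...,M}` up to cyclic shift) with exactly `c` cyclic descents that are fixed by
adding `t` modulo `M+1` to each letter (adding `t` to each letter yields a cyclic shift of
the same word).  Each class of words has exactly `M+1` representatives, so we divide. -/
def circCount (M c t : ℕ) : ℕ :=
  ((Finset.univ.filter (fun w : Equiv.Perm (Fin (M + 1)) =>
      cyclicDescentCount w = c ∧
        ∃ s : Fin (M + 1), ∀ i, w (i + s) = w i + (Fin.ofNat (M + 1) t : Fin (M + 1)))).card) / (M + 1)

/-! Write `N = d * n` and `c` for the number of cyclic descents of `w`. The gaps
`(w (i + 1) - w i) mod N` sum to `N * c`, since each descent is one wrap-around. If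
`w (i + s) = w i + n`, the gaps are `s`-periodic, and `d * s ≡ 0 (mod N)` because adding `n`
`d` times is the identity; say `d * s = k * N`. Summing the gaps over `d * s` positions in two
ways gives `d * T = k * N * c` for the sum `T` of the first `s` gaps, while telescoping gives
`T ≡ n (mod N)`. Hence `k * c ≡ 1 (mod d)`, so `c` is coprime to `d`. -/

open Finset Fin.NatCast Fin.CommRing

theorem Fin.val_sub_add_val {N : ℕ} (a b : Fin N) :
    (a - b).val + b.val = a.val + N * if a < b then 1 else 0 := by
  split_ifs with hab
  · rw [Fin.coe_sub_iff_lt.mpr hab]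
    have := Fin.lt_def.mp hab
    omega
  · rw [Fin.coe_sub_iff_le.mpr (not_lt.mp hab)]
    have := Fin.le_def.mp (not_lt.mp hab)
    omega

theorem Function.Periodic.sum_range_mul {M : Type*} [AddCommMonoid M] {f : ℕ → M} {p : ℕ}
    (hf : Function.Periodic f p) (u : ℕ) :
    ∑ j ∈ range (u * p), f j = u • ∑ j ∈ range p, f j := by
  induction u with
  | zero => simp
  | succ u ih =>
    rw [Nat.succ_mul, sum_range_add, ih, succ_nsmul]
    congr 1
    exact sum_congr rfl fun j _ => by rw [add_comm]; exact hf.nat_mul u j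

theorem Nat.coprime_of_mul_eq_of_modEq {N n d c k T : ℕ} (hN : N = d * n) (hn : n ≠ 0)
    (hd : d ≠ 0) (hdT : d * T = k * (N * c)) (hT : T ≡ n [MOD N]) : c.Coprime d := by
  subst hN
  have hT' : T = n * (k * c) :=
    Nat.eq_of_mul_eq_mul_left (Nat.pos_of_ne_zero hd) (by rw [hdT]; ring)
  have hkc : k * c ≡ 1 [MOD d] :=
    Nat.ModEq.mul_left_cancel' hn (by rwa [mul_one, mul_comm n d, ← hT'])
  exact Nat.Coprime.coprime_mul_left (hkc.gcd_eq.trans (Nat.gcd_one_left d))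

section CyclicWord

variable {M : ℕ} (w : Equiv.Perm (Fin (M + 1)))

theorem sum_val_sub_eq_mul_cyclicDescentCount :
    ∑ i, (w (i + 1) - w i).val = (M + 1) * cyclicDescentCount w := by
  have hshift : ∑ i, (w (i + 1)).val = ∑ i, (w i).val :=
    Fintype.sum_equiv (Equiv.addRight 1) _ _ fun _ => rfl
  apply Nat.add_right_cancel (m := ∑ i, (w i).val)
  calc ∑ i, (w (i + 1) - w i).val + ∑ i, (w i).val
      = ∑ i, ((w (i + 1)).val + (M + 1) * if w (i + 1) < w i then 1 else 0) := by
        rw [← sum_add_distrib]; simp only [Fin.val_sub_add_val]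
    _ = (M + 1) * cyclicDescentCount w + ∑ i, (w i).val := by
        rw [sum_add_distrib, ← mul_sum, sum_boole, hshift, add_comm]; rfl

theorem natCast_sum_range_val_sub (m : ℕ) :
    ((∑ j ∈ range m, (w (j + 1) - w j).val : ℕ) : Fin (M + 1)) = w m - w 0 := by
  push_cast [Fin.cast_val_eq_self]
  simpa using sum_range_sub (fun j : ℕ => w j) m

variable {w} {s t : Fin (M + 1)}

theorem sub_periodic_of_apply_add (hs : ∀ i, w (i + s) = w i + t) (i : Fin (M + 1)) :
    w (i + s + 1) - w (i + s) = w (i + 1) - w i := by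
  rw [add_right_comm, hs, hs, add_sub_add_right_eq_sub]

theorem apply_add_nsmul_of_apply_add (hs : ∀ i, w (i + s) = w i + t) (u : ℕ)
    (i : Fin (M + 1)) : w (i + u • s) = w i + u • t := by
  induction u with
  | zero => simp
  | succ u ih => rw [succ_nsmul, ← add_assoc, hs, ih, succ_nsmul, add_assoc]

theorem coprime_cyclicDescentCount_of_apply_add {n d : ℕ} (hN : M + 1 = d * n) (hn : 0 < n)
    (hd : 0 < d) (hs : ∀ i, w (i + s) = w i + n) : (cyclicDescentCount w).Coprime d := by
  set f : ℕ → ℕ := fun j => (w (j + 1) - w j).val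
  have hfN : Function.Periodic f (M + 1) := fun j => by simp [f]
  have hfs : Function.Periodic f s.val := fun j => by
    simp only [f, Nat.cast_add, Fin.cast_val_eq_self]
    rw [sub_periodic_of_apply_add hs]
  have hsumN : ∑ j ∈ range (M + 1), f j = (M + 1) * cyclicDescentCount w := by
    rw [← Fin.sum_univ_eq_sum_range]
    simpa only [f, Fin.cast_val_eq_self] using sum_val_sub_eq_mul_cyclicDescentCount w
  obtain ⟨k, hk⟩ : M + 1 ∣ d * s.val := by
    rw [← Fin.natCast_eq_zero]
    apply w.injective
    have hdn : (d : Fin (M + 1)) * n = 0 := by rw [← Nat.cast_mul, ← hN, Fin.natCast_self]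
    simpa [hdn] using apply_add_nsmul_of_apply_add hs d 0
  have hdT : d * ∑ j ∈ range s.val, f j = k * ((M + 1) * cyclicDescentCount w) := by
    rw [← smul_eq_mul, ← hfs.sum_range_mul, hk, mul_comm, hfN.sum_range_mul, hsumN, smul_eq_mul]
  have hT : ∑ j ∈ range s.val, f j ≡ n [MOD M + 1] := by
    have := natCast_sum_range_val_sub w s.val
    rwa [Fin.cast_val_eq_self, ← zero_add s, hs, zero_add, add_sub_cancel_left, Fin.ext_iff,
      Fin.val_natCast, Fin.val_natCast] at this
  exact Nat.coprime_of_mul_eq_of_modEq hN hn.ne' hd.ne' hdT hT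

end CyclicWord

theorem circCount_eq_zero_of_not_coprime_general (n c d : ℕ)
    (hn : 0 < n) (hd : 0 < d)
    (h : 1 < Nat.gcd c d) :
    circCount (d * n - 1) c n = 0 := by
  have hN : d * n - 1 + 1 = d * n := Nat.sub_add_cancel (Nat.mul_pos hd hn)
  rw [circCount, filter_eq_empty_iff.mpr, card_empty, Nat.zero_div]
  rintro w - ⟨hw, s, hs⟩
  exact h.ne' (hw ▸ coprime_cyclicDescentCount_of_apply_add hN hn hd hs)

/-- `⟨dn-1, c-1⟩_d = 0` whenever `gcd(c, d) > 1`: there are no circular permutations of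
`{0,...,dn-1}` with exactly `c` cyclic descents fixed by adding `(dn)/d = n` modulo `dn`
unless `c` is coprime to `d`. -/
theorem circCount_eq_zero_of_not_coprime (n c d : ℕ)
    (hn : 0 < n) (hc : 0 < c) (hd : 0 < d) (hcd : c < d * n)
    (h : 1 < Nat.gcd c d) :
    circCount (d * n - 1) c n = 0 :=
  circCount_eq_zero_of_not_coprime_general n c d hn hd h
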